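/- Let G be an inverse semigroup with idempotent set E, let h ∈ G, and let e ∈ E satisfy e · (h h*) = e. Then the map g ↦ h* g is a bijection from { g ∈ G : g g* = e } onto { g ∈ G : g g* = h* e h }, with inverse l ↦ h l. -/
import Mathlib


/-- An inverse semigroup: a semigroup with an involution `g ↦ g*` such that
`g** = g`, `(gh)* = h* g*`, `g g* g = g`, and any two idempotents commute. -/
class InverseSemigroup (G : Type*) extends Semigroup G, Star G where
  star_star : ∀ g : G, star (star g) = g
  star_mul : ∀ g h : G, star (g * h) = star h * star g
  mul_star_mul_self : ∀ g : G, g * star g * g = g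
  idem_mul_comm : ∀ e f : G, e * e = e → f * f = f → e * f = f * e

section aux
variable {G : Type*} [InverseSemigroup G]

lemma isg_star_star (g : G) : star (star g) = g := InverseSemigroup.star_star g

lemma isg_star_mul (g h : G) : star (g * h) = star h * star g :=
  InverseSemigroup.star_mul g h

lemma isg_mss (g : G) : g * star g * g = g := InverseSemigroup.mul_star_mul_self g

lemma isg_smm (g : G) : star g * (g * star g) = star g := by
  have := isg_mss (star g); rw [isg_star_star, mul_assoc] at this; exact this

lemma isg_idem (g : G) : (g * star g) * (g * star g) = g * star g := by
  calc (g * star g) * (g * star g) = g * (star g * (g * star g)) := by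
        simp [mul_assoc]
    _ = g * star g := by rw [isg_smm]

end aux

/-- In an inverse semigroup, if `e` is an idempotent with `e (h h*) = e`, then
`g ↦ h* g` is a bijection from `{g : g g* = e}` onto `{g : g g* = h* e h}`,
with inverse `l ↦ h l`. -/
theorem stmt_10 {G : Type*} [InverseSemigroup G] (h e : G) (he : e * e = e)
    (hle : e * (h * star h) = e) :
    Set.BijOn (fun g => star h * g)
      {g : G | g * star g = e} {g : G | g * star g = star h * e * h} ∧
    Set.InvOn (fun l => h * l) (fun g => star h * g)
      {g : G | g * star g = e} {g : G | g * star g = star h * e * h} := by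
  have hcomm : (h * star h) * e = e :=
    (InverseSemigroup.idem_mul_comm e (h * star h) he (isg_idem h)).symm.trans hle
  have hM1 : Set.MapsTo (fun g => star h * g)
      {g : G | g * star g = e} {g : G | g * star g = star h * e * h} := by
    intro g hg
    simp only [Set.mem_setOf_eq] at hg ⊢
    rw [isg_star_mul, isg_star_star]
    calc star h * g * (star g * h) = star h * (g * star g) * h := by simp [mul_assoc]
      _ = star h * e * h := by rw [hg]
  have hM2 : Set.MapsTo (fun l => h * l)
      {g : G | g * star g = star h * e * h} {g : G | g * star g = e} := by
    intro l hl
    simp only [Set.mem_setOf_eq] at hl ⊢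
    rw [isg_star_mul]
    calc h * l * (star l * star h) = h * (l * star l) * star h := by simp [mul_assoc]
      _ = h * (star h * e * h) * star h := by rw [hl]
      _ = (h * star h) * e * (h * star h) := by simp [mul_assoc]
      _ = e * (h * star h) := by rw [hcomm]
      _ = e := hle
  have hInv : Set.InvOn (fun l => h * l) (fun g => star h * g)
      {g : G | g * star g = e} {g : G | g * star g = star h * e * h} := by
    constructor
    · intro g hg
      simp only [Set.mem_setOf_eq] at hg
      have hg' : g = e * g := by
        conv_lhs => rw [← isg_mss g]
        rw [hg]
      show h * (star h * g) = g
      calc h * (star h * g) = h * (star h * (e * g)) := by rw [← hg']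
        _ = ((h * star h) * e) * g := by simp [mul_assoc]
        _ = e * g := by rw [hcomm]
        _ = g := hg'.symm
    · intro l hl
      simp only [Set.mem_setOf_eq] at hl
      have hl' : l = (star h * e * h) * l := by
        conv_lhs => rw [← isg_mss l]
        rw [hl]
      show star h * (h * l) = l
      calc star h * (h * l) = star h * (h * ((star h * e * h) * l)) := by rw [← hl']
        _ = star h * ((h * star h) * e) * (h * l) := by simp [mul_assoc]
        _ = star h * e * (h * l) := by rw [hcomm]
        _ = (star h * e * h) * l := by simp [mul_assoc]
        _ = l := hl'.symm
  exact ⟨hInv.bijOn hM1 hM2, hInv⟩
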